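/- arXiv:2209.00387 — 8 statements merged into one kernel-verified Lean document; each statement's English description precedes it below -/
import Mathlib

section
/- There exist a tensor M (of order 4, dimension 2) that is not semipositive and nonnegative diagonal matrices D1, D2 such that both D1·M and D2·M are semipositive tensors; hence semipositivity of DM for some nonnegative diagonal D does not imply semipositivity of M. -/
open Finset

/-- Action of a real tensor of order `k+1` and dimension `n` (entries indexed by a
leading index and `k` trailing indices) on a vector: `(M u^{k})_i = ∑ m_{i f} ∏ u_{f j}`. -/
def tApply {n k : ℕ} (m : Fin n → (Fin k → Fin n) → ℝ) (u : Fin n → ℝ) (i : Fin n) : ℝ :=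
  ∑ f : Fin k → Fin n, m i f * ∏ j, u (f j)

/-- `M` is semipositive: for every nonzero `u ≥ 0` there is `l` with `u l > 0` and `(M u^{r-1})_l ≥ 0`. -/
def Semipositive {n k : ℕ} (m : Fin n → (Fin k → Fin n) → ℝ) : Prop :=
  ∀ u : Fin n → ℝ, 0 ≤ u → u ≠ 0 → ∃ l, 0 < u l ∧ 0 ≤ tApply m u l

/-- `M` is strictly semipositive. -/
def StrictlySemipositive {n k : ℕ} (m : Fin n → (Fin k → Fin n) → ℝ) : Prop :=
  ∀ u : Fin n → ℝ, 0 ≤ u → u ≠ 0 → ∃ l, 0 < u l ∧ 0 < tApply m u l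

/-- A matrix is semimonotone. -/
def Semimonotone {n : ℕ} (A : Fin n → Fin n → ℝ) : Prop :=
  ∀ z : Fin n → ℝ, 0 ≤ z → z ≠ 0 → ∃ k, 0 < z k ∧ 0 ≤ ∑ j, A k j * z j

/-- A matrix is strictly semimonotone. -/
def StrictlySemimonotone {n : ℕ} (A : Fin n → Fin n → ℝ) : Prop :=
  ∀ z : Fin n → ℝ, 0 ≤ z → z ≠ 0 → ∃ k, 0 < z k ∧ 0 < ∑ j, A k j * z j

/-- `M` is row diagonal: entries vanish unless all trailing indices coincide. -/
def RowDiagonal {n k : ℕ} (m : Fin n → (Fin k → Fin n) → ℝ) : Prop :=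
  ∀ i (f : Fin k → Fin n), (¬ ∃ c, ∀ j, f j = c) → m i f = 0

/-- Majorization matrix `M̃_{ij} = m_{i j ... j}`. -/
def majorization {n k : ℕ} (m : Fin n → (Fin k → Fin n) → ℝ) : Fin n → Fin n → ℝ :=
  fun i j => m i (fun _ => j)

/-! At `u = (1, 1)` both components of `M u³` are negative, so `M` is not semipositive.
A diagonal `D ≥ 0` with `d_l = 0` kills row `l` of `D M`, so every `u ≥ 0` with `u_l > 0` is
witnessed by `l`; the remaining vectors are positive multiples of the other unit vector, on
which the surviving component of `M u³` is `2u₁³` resp. `u₀³`. -/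

section TensorAction

variable {n k : ℕ}

lemma tApply_add (m₁ m₂ : Fin n → (Fin k → Fin n) → ℝ) (u : Fin n → ℝ) (i : Fin n) :
    tApply (m₁ + m₂) u i = tApply m₁ u i + tApply m₂ u i := by
  simp only [tApply, Pi.add_apply, add_mul, sum_add_distrib]

lemma tApply_diag_mul (d : Fin n → ℝ) (m : Fin n → (Fin k → Fin n) → ℝ) (u : Fin n → ℝ)
    (i : Fin n) : tApply (fun i f => d i * m i f) u i = d i * tApply m u i := by
  simp only [tApply, mul_sum, mul_assoc]

def monomialTensor (g : Fin k → Fin n) (c : Fin n → ℝ) : Fin n → (Fin k → Fin n) → ℝ :=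
  fun i f => if f = g then c i else 0

lemma tApply_monomialTensor (g : Fin k → Fin n) (c : Fin n → ℝ) (u : Fin n → ℝ) (i : Fin n) :
    tApply (monomialTensor g c) u i = c i * ∏ j, u (g j) := by
  simp only [tApply, monomialTensor, ite_mul, zero_mul, sum_ite_eq', mem_univ, if_true]

end TensorAction

section Semipositivity

variable {n k : ℕ}

lemma not_semipositive_of_forall_neg {m : Fin n → (Fin k → Fin n) → ℝ} {u : Fin n → ℝ}
    (hu : 0 ≤ u) (hne : u ≠ 0) (hneg : ∀ l, tApply m u l < 0) : ¬ Semipositive m := fun h =>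
  let ⟨l, _, hl⟩ := h u hu hne
  (hneg l).not_ge hl

lemma semipositive_diag_mul {d : Fin n → ℝ} {m : Fin n → (Fin k → Fin n) → ℝ} (hd : 0 ≤ d)
    (h : ∀ u : Fin n → ℝ, 0 ≤ u → u ≠ 0 → (∀ l, d l = 0 → u l = 0) →
      ∃ l, 0 < u l ∧ 0 ≤ tApply m u l) :
    Semipositive (fun i f => d i * m i f) := by
  intro u hu hne
  by_cases hsupp : ∀ l, d l = 0 → u l = 0
  · obtain ⟨l, hul, hl⟩ := h u hu hne hsupp
    exact ⟨l, hul, (tApply_diag_mul d m u l).symm ▸ mul_nonneg (hd l) hl⟩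
  · push Not at hsupp
    obtain ⟨l, hdl, hul⟩ := hsupp
    exact ⟨l, (hu l).lt_of_ne' hul, by rw [tApply_diag_mul, hdl, zero_mul]⟩

end Semipositivity

lemma pos_apply_one_sub_of_apply_eq_zero {u : Fin 2 → ℝ} (hu : 0 ≤ u) (hne : u ≠ 0) {l : Fin 2}
    (hl : u l = 0) : 0 < u (1 - l) := by
  obtain ⟨i, hi⟩ := (Pi.lt_def.mp (hu.lt_of_ne' hne)).2
  fin_cases l <;> fin_cases i <;> simp_all

noncomputable def exampleTensor : Fin 2 → (Fin 3 → Fin 2) → ℝ :=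
  monomialTensor ![0, 0, 0] ![1, 0] + monomialTensor ![0, 0, 1] ![-3, -3] +
    monomialTensor ![1, 1, 1] ![-1, 2]

lemma tApply_exampleTensor (u : Fin 2 → ℝ) :
    tApply exampleTensor u = ![u 0 ^ 3 - 3 * u 0 ^ 2 * u 1 - u 1 ^ 3,
      -3 * u 0 ^ 2 * u 1 + 2 * u 1 ^ 3] := by
  funext i
  fin_cases i <;>
    simp [exampleTensor, tApply_add, tApply_monomialTensor, Fin.prod_univ_three] <;> ring

lemma not_semipositive_exampleTensor : ¬ Semipositive exampleTensor := by
  refine not_semipositive_of_forall_neg (u := fun _ => 1) (fun _ => zero_le_one)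
    (Function.ne_iff.mpr ⟨0, one_ne_zero⟩) fun l => ?_
  fin_cases l <;> norm_num [tApply_exampleTensor]

lemma semipositive_diag_mul_exampleTensor_of_eq_zero {d : Fin 2 → ℝ} (hd : 0 ≤ d) (l : Fin 2)
    (hdl : d l = 0) : Semipositive (fun i f => d i * exampleTensor i f) := by
  refine semipositive_diag_mul hd fun u hu hne hsupp => ?_
  have hul := hsupp l hdl
  refine ⟨1 - l, pos_apply_one_sub_of_apply_eq_zero hu hne hul, ?_⟩
  have := hu (1 - l)
  fin_cases l <;> simp_all [tApply_exampleTensor]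

theorem stmt3 : ∃ (m : Fin 2 → (Fin 3 → Fin 2) → ℝ) (d1 d2 : Fin 2 → ℝ),
    (∀ i, 0 ≤ d1 i) ∧ (∀ i, 0 ≤ d2 i) ∧ ¬ Semipositive m ∧
    Semipositive (fun i f => d1 i * m i f) ∧
    Semipositive (fun i f => d2 i * m i f) := by
  have hd₁ : (0 : Fin 2 → ℝ) ≤ ![0, 3] := fun i => by fin_cases i <;> norm_num
  have hd₂ : (0 : Fin 2 → ℝ) ≤ ![2, 0] := fun i => by fin_cases i <;> norm_num
  exact ⟨exampleTensor, ![0, 3], ![2, 0], hd₁, hd₂, not_semipositive_exampleTensor,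
    semipositive_diag_mul_exampleTensor_of_eq_zero hd₁ 0 rfl,
    semipositive_diag_mul_exampleTensor_of_eq_zero hd₂ 1 rfl⟩
end

section
/- A tensor M of order r and dimension n is semipositive if and only if for every δ > 0 the tensor M + δI is strictly semipositive, where I is the identity tensor. -/
open Finset

lemma tApply_pert {n k : ℕ} (m : Fin n → (Fin k → Fin n) → ℝ) (δ : ℝ) (u : Fin n → ℝ)
    (i : Fin n) :
    tApply (fun i f => m i f + δ * (if f = (fun _ => i) then 1 else 0)) u i
      = tApply m u i + δ * (u i) ^ k := by
  unfold tApply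
  have : ∀ f : Fin k → Fin n,
      (m i f + δ * (if f = (fun _ => i) then 1 else 0)) * ∏ j, u (f j)
      = m i f * ∏ j, u (f j) + (if f = (fun _ => i) then δ * ∏ j, u (f j) else 0) := by
    intro f; by_cases h : f = (fun _ => i) <;> simp [h] <;> ring
  rw [Finset.sum_congr rfl (fun f _ => this f), Finset.sum_add_distrib,
    Finset.sum_ite_eq' Finset.univ (fun _ => i) (fun f => δ * ∏ j, u (f j))]
  simp [Finset.prod_const, Finset.card_univ]

theorem stmt11 (n r : ℕ) (hr : 2 ≤ r) (m : Fin n → (Fin (r - 1) → Fin n) → ℝ) :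
    Semipositive m ↔ ∀ δ : ℝ, 0 < δ →
      StrictlySemipositive
        (fun i f => m i f + δ * (if f = (fun _ => i) then 1 else 0)) := by
  have hk : 1 ≤ r - 1 := by omega
  constructor
  · intro hm δ hδ u hu hne
    obtain ⟨l, hl, hml⟩ := hm u hu hne
    refine ⟨l, hl, ?_⟩
    rw [tApply_pert]
    have : 0 < δ * u l ^ (r - 1) := by positivity
    linarith
  · intro h u hu hne
    by_contra hc
    push_neg at hc
    set S := Finset.univ.filter (fun l => 0 < u l) with hS
    have hSne : S.Nonempty := by
      rcases Function.ne_iff.mp hne with ⟨l, hl⟩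
      exact ⟨l, Finset.mem_filter.mpr ⟨Finset.mem_univ l, lt_of_le_of_ne (hu l) (Ne.symm hl)⟩⟩
    set δ := S.inf' hSne (fun l => (-tApply m u l) / (u l ^ (r - 1))) with hδdef
    have hδpos : 0 < δ := by
      apply Finset.lt_inf'_iff hSne |>.mpr
      intro l hl
      have hul : 0 < u l := (Finset.mem_filter.mp hl).2
      have hneg : tApply m u l < 0 := hc l hul
      have : 0 < u l ^ (r - 1) := pow_pos hul _
      exact div_pos (by linarith) this
    obtain ⟨l, hl, hml⟩ := h δ hδpos u hu hne
    rw [tApply_pert] at hml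
    have hlS : l ∈ S := Finset.mem_filter.mpr ⟨Finset.mem_univ l, hl⟩
    have hle : δ ≤ (-tApply m u l) / (u l ^ (r - 1)) := Finset.inf'_le _ hlS
    have hp : 0 < u l ^ (r - 1) := pow_pos hl _
    have := (le_div_iff₀ hp).mp hle
    linarith
end

section
/- Let M be a tensor of even order r and dimension n. If M is not strictly semipositive, then there exists a diagonal matrix G with diagonal entries in [0,1] such that the tensor G·I + (I_n − G)·M has a nonzero nonnegative null vector, i.e., some u ≥ 0, u ≠ 0, with g_i u_i^{r-1} + (1 − g_i)(M u^{r-1})_i = 0 for all i. -/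
open Finset

lemma aux13 (a b : ℝ) (ha : 0 ≤ a) (hab : a = 0 ∨ b ≤ 0) :
    0 ≤ -b / (a - b) ∧ -b / (a - b) ≤ 1 ∧ (-b / (a - b)) * a + (1 - -b / (a - b)) * b = 0 := by
  rcases eq_or_ne b 0 with hb | hb
  · subst hb; simp
  rcases hab with h0 | hbneg
  · subst h0
    rw [zero_sub, neg_div_neg_eq, div_self hb]
    norm_num
  · have hd : 0 < a - b := by
      rcases lt_or_eq_of_le hbneg with h | h
      · linarith
      · exact absurd h hb
    refine ⟨div_nonneg (by linarith) hd.le, ?_, ?_⟩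
    · rw [div_le_one hd]; linarith
    · field_simp; ring

theorem stmt13 (n r : ℕ) (hr : 2 ≤ r) (hre : Even r)
    (m : Fin n → (Fin (r - 1) → Fin n) → ℝ) (hM : ¬ StrictlySemipositive m) :
    ∃ g : Fin n → ℝ, (∀ i, 0 ≤ g i ∧ g i ≤ 1) ∧
      ∃ u : Fin n → ℝ, 0 ≤ u ∧ u ≠ 0 ∧
        ∀ i, g i * u i ^ (r - 1) + (1 - g i) * tApply m u i = 0 := by
  unfold StrictlySemipositive at hM
  push_neg at hM
  obtain ⟨u, hu0, hune, hul⟩ := hM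
  have key : ∀ i, u i ^ (r - 1) = 0 ∨ tApply m u i ≤ 0 := by
    intro i
    rcases eq_or_lt_of_le (hu0 i) with h0 | hpos
    · exact Or.inl (by rw [← h0]; exact zero_pow (by omega))
    · exact Or.inr (hul i hpos)
  refine ⟨fun i => -tApply m u i / (u i ^ (r - 1) - tApply m u i), ?_, u, hu0, hune, ?_⟩ <;>
    intro i <;>
    obtain ⟨h1, h2, h3⟩ := aux13 (u i ^ (r - 1)) (tApply m u i) (pow_nonneg (hu0 i) _) (key i)
  · exact ⟨h1, h2⟩
  · exact h3
end

section
/- Combining both directions: a tensor M of even order r and dimension n is strictly semipositive if and only if for every diagonal matrix G with entries g_i ∈ [0,1], the tensor G·I + (I_n − G)·M has no nonzero nonnegative null vector. -/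
open Finset

theorem stmt14 (n r : ℕ) (hr : 2 ≤ r) (hre : Even r)
    (m : Fin n → (Fin (r - 1) → Fin n) → ℝ) :
    StrictlySemipositive m ↔
      ∀ g : Fin n → ℝ, (∀ i, 0 ≤ g i ∧ g i ≤ 1) →
        ¬ ∃ u : Fin n → ℝ, 0 ≤ u ∧ u ≠ 0 ∧
            ∀ i, g i * u i ^ (r - 1) + (1 - g i) * tApply m u i = 0 := by
  have hr1 : 1 ≤ r - 1 := by omega
  constructor
  · rintro hM g hg ⟨u, hu0, hune, heq⟩
    obtain ⟨l, hul, hTl⟩ := hM u hu0 hune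
    have h1 := heq l
    obtain ⟨hg0, hg1⟩ := hg l
    have hpow : 0 < u l ^ (r - 1) := pow_pos hul _
    nlinarith [mul_nonneg hg0 hpow.le, mul_nonneg (by linarith : (0:ℝ) ≤ 1 - g l) hTl.le]
  · intro h u hu0 hune
    by_contra hc
    push_neg at hc
    refine h (fun i => if 0 < u i then -tApply m u i / (u i ^ (r-1) - tApply m u i) else 1)
      (fun i => ?_) ⟨u, hu0, hune, fun i => ?_⟩
    · by_cases hi : 0 < u i
      · simp only [hi, if_pos]
        have hTi : tApply m u i ≤ 0 := hc i hi
        have hpow : 0 < u i ^ (r - 1) := pow_pos hi _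
        have hd : 0 < u i ^ (r-1) - tApply m u i := by linarith
        exact ⟨div_nonneg (by linarith) hd.le, by rw [div_le_one hd]; linarith⟩
      · simp [hi]
    · by_cases hi : 0 < u i
      · simp only [hi, if_pos]
        have hTi : tApply m u i ≤ 0 := hc i hi
        have hpow : 0 < u i ^ (r - 1) := pow_pos hi _
        have hd : u i ^ (r-1) - tApply m u i ≠ 0 := ne_of_gt (by linarith)
        field_simp
        ring
      · have hui : u i = 0 := le_antisymm (not_lt.mp hi) (hu0 i)
        simp [hi, hui, zero_pow (by omega : r - 1 ≠ 0)]
end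

section
/- Let M be a row diagonal tensor of even order r and dimension n, with majorization matrix M̃ defined by M̃_{ij} = m_{ij...j}. Then M is a semipositive tensor if and only if M̃ is a semimonotone matrix. -/
open Finset

lemma tApply_rowDiagonal {n k : ℕ} (hk : 0 < k) (m : Fin n → (Fin k → Fin n) → ℝ)
    (hrd : RowDiagonal m) (u : Fin n → ℝ) (i : Fin n) :
    tApply m u i = ∑ j, majorization m i j * (u j) ^ k := by
  unfold tApply
  have hinj : Function.Injective (fun c : Fin n => (fun _ => c : Fin k → Fin n)) := by
    intro a b hab
    exact congrFun hab ⟨0, hk⟩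
  rw [show (Finset.univ : Finset (Fin k → Fin n)) =
      (Finset.univ.image (fun c : Fin n => (fun _ => c : Fin k → Fin n))) ∪
        ((Finset.univ : Finset (Fin k → Fin n)) \
          (Finset.univ.image (fun c : Fin n => (fun _ => c : Fin k → Fin n)))) from
    (Finset.union_sdiff_of_subset (Finset.subset_univ _)).symm]
  rw [Finset.sum_union (Finset.disjoint_sdiff)]
  have h2 : ∑ f ∈ (Finset.univ : Finset (Fin k → Fin n)) \
      (Finset.univ.image (fun c : Fin n => (fun _ => c : Fin k → Fin n))),
      m i f * ∏ j, u (f j) = 0 := by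
    apply Finset.sum_eq_zero
    intro f hf
    rw [Finset.mem_sdiff, Finset.mem_image] at hf
    have : m i f = 0 := by
      apply hrd i f
      rintro ⟨c, hc⟩
      exact hf.2 ⟨c, Finset.mem_univ _, (funext hc).symm⟩
    simp [this]
  rw [h2, add_zero, Finset.sum_image (fun a _ b _ h => hinj h)]
  apply Finset.sum_congr rfl
  intro c _
  simp [majorization, Finset.prod_const]

lemma pos_of_pow_pos' {x : ℝ} {k : ℕ} (hk : 0 < k) (hx : 0 ≤ x) (h : 0 < x ^ k) : 0 < x := by
  rcases hx.lt_or_eq with h1 | h1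
  · exact h1
  · exfalso
    rw [← h1, zero_pow hk.ne'] at h
    exact lt_irrefl 0 h

theorem stmt15 (n r : ℕ) (hr : 2 ≤ r) (hre : Even r)
    (m : Fin n → (Fin (r - 1) → Fin n) → ℝ) (hrd : RowDiagonal m) :
    Semipositive m ↔ Semimonotone (majorization m) := by
  have hk : 0 < r - 1 := by omega
  have hkR : ((r - 1 : ℕ) : ℝ) ≠ 0 := by positivity
  constructor
  · intro hsp z hz hz0
    set u : Fin n → ℝ := fun j => (z j) ^ (((r - 1 : ℕ) : ℝ)⁻¹) with hu
    have hu0 : 0 ≤ u := fun j => Real.rpow_nonneg (hz j) _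
    have hpow : ∀ j, u j ^ (r - 1) = z j := by
      intro j
      rw [hu, ← Real.rpow_natCast ((z j) ^ (((r - 1 : ℕ) : ℝ)⁻¹)) (r - 1),
        ← Real.rpow_mul (hz j), inv_mul_cancel₀ hkR, Real.rpow_one]
    have hune : u ≠ 0 := by
      intro h
      apply hz0
      funext j
      have := congrFun h j
      simp only [Pi.zero_apply] at this ⊢
      rw [← hpow j, this, zero_pow hk.ne']
    obtain ⟨l, hl1, hl2⟩ := hsp u hu0 hune
    rw [tApply_rowDiagonal hk m hrd] at hl2
    refine ⟨l, ?_, ?_⟩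
    · rw [← hpow l]; positivity
    · convert hl2 using 2 with j
      rw [hpow j]
  · intro hsm u hu hu0
    set z : Fin n → ℝ := fun j => u j ^ (r - 1) with hz
    have hz0 : 0 ≤ z := fun j => pow_nonneg (hu j) _
    have hzne : z ≠ 0 := by
      intro h
      apply hu0
      funext j
      have := congrFun h j
      simp only [hz, Pi.zero_apply, pow_eq_zero_iff hk.ne'] at this
      exact this
    obtain ⟨l, hl1, hl2⟩ := hsm z hz0 hzne
    refine ⟨l, pos_of_pow_pos' hk (hu l) hl1, ?_⟩
    rw [tApply_rowDiagonal hk m hrd]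
    exact hl2
end

section
/- Let M be a row diagonal tensor of even order r and dimension n with majorization matrix M̃. Then M is a strictly semipositive tensor if and only if M̃ is a strictly semimonotone matrix. -/
/-
For a row diagonal tensor only the entries `m_{i j ... j}` survive, so
`(M u^{r-1})_i = ∑_j M̃_{ij} u_j^{r-1}`. On the nonnegative cone the coordinatewise power
`u ↦ u^{r-1}` is a bijection (with inverse the coordinatewise `(r-1)`-th root) that preserves
the support, so strict semipositivity of `M` at `u` is strict semimonotonicity of `M̃` at
`u^{r-1}`.
-/

open Finset

lemma tApply_of_rowDiagonal {n k : ℕ} (hk : k ≠ 0) {m : Fin n → (Fin k → Fin n) → ℝ}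
    (hrd : RowDiagonal m) (u : Fin n → ℝ) (i : Fin n) :
    tApply m u i = ∑ j, majorization m i j * u j ^ k := by
  have i₀ : Fin k := ⟨0, Nat.pos_of_ne_zero hk⟩
  unfold tApply
  rw [← sum_filter_of_ne (p := fun f : Fin k → Fin n => ∃ c, ∀ j, f j = c)
    fun f _ hf => not_not.mp fun hc => hf (by rw [hrd i f hc, zero_mul])]
  refine sum_bij' (fun f _ => f i₀) (fun c _ _ => c) (by simp)
    (fun c _ => mem_filter.mpr ⟨mem_univ _, c, fun _ => rfl⟩) ?_ (fun _ _ => rfl) ?_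
  all_goals
    intro f hf
    obtain ⟨c, hc⟩ := (mem_filter.mp hf).2
    obtain rfl : f = fun _ => c := funext hc
  · rfl
  · simp [majorization, prod_const]

lemma strictlySemimonotone_iff_pow {n k : ℕ} (hk : k ≠ 0) (A : Fin n → Fin n → ℝ) :
    StrictlySemimonotone A ↔
      ∀ u : Fin n → ℝ, 0 ≤ u → u ≠ 0 → ∃ l, 0 < u l ∧ 0 < ∑ j, A l j * u j ^ k := by
  constructor
  · intro hA u hu hu0
    obtain ⟨j, hj⟩ := Function.ne_iff.mp hu0
    obtain ⟨l, hl, hAl⟩ := hA (fun j => u j ^ k) (fun j => pow_nonneg (hu j) k)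
      (Function.ne_iff.mpr ⟨j, pow_ne_zero k hj⟩)
    exact ⟨l, (hu l).lt_of_ne' fun h => by simp [h, hk] at hl, hAl⟩
  · intro hA z hz hz0
    have hroot : ∀ j, (z j ^ (k⁻¹ : ℝ)) ^ k = z j := fun j => Real.rpow_inv_natCast_pow (hz j) hk
    obtain ⟨j, hj⟩ := Function.ne_iff.mp hz0
    obtain ⟨l, hl, hAl⟩ := hA (fun j => z j ^ (k⁻¹ : ℝ)) (fun j => Real.rpow_nonneg (hz j) _)
      (Function.ne_iff.mpr ⟨j, fun h => hj (by rw [← hroot j]; simp [h, hk])⟩)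
    refine ⟨l, ?_, ?_⟩
    · simpa [hroot l] using pow_pos hl k
    · simpa only [hroot] using hAl

theorem stmt16_general (n r : ℕ) (hr : 2 ≤ r)
    (m : Fin n → (Fin (r - 1) → Fin n) → ℝ) (hrd : RowDiagonal m) :
    StrictlySemipositive m ↔ StrictlySemimonotone (majorization m) := by
  have hk : r - 1 ≠ 0 := by omega
  rw [strictlySemimonotone_iff_pow hk]
  simp only [StrictlySemipositive, tApply_of_rowDiagonal hk hrd]

theorem stmt16 (n r : ℕ) (hr : 2 ≤ r) (hre : Even r)
    (m : Fin n → (Fin (r - 1) → Fin n) → ℝ) (hrd : RowDiagonal m) :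
    StrictlySemipositive m ↔ StrictlySemimonotone (majorization m) :=
  stmt16_general n r hr m hrd
end

section
/- The tensor M of order 4 and dimension 3 defined by M u^3 = (u_1^2 u_2 + u_2 u_3^2 + u_2^2 u_3, u_1^2 u_2 + 2u_2^2 u_3, −2u_1 u_3^2 − 4u_2^2 u_3) is a semipositive tensor: for every nonzero u ≥ 0 in ℝ^3 there exists an index l with u_l > 0 and (M u^3)_l ≥ 0. -/
open Finset

theorem stmt18 (m : Fin 3 → (Fin 3 → Fin 3) → ℝ)
    (hm : ∀ u : Fin 3 → ℝ,
      tApply m u 0 = u 0 ^ 2 * u 1 + u 1 * u 2 ^ 2 + u 1 ^ 2 * u 2 ∧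
      tApply m u 1 = u 0 ^ 2 * u 1 + 2 * u 1 ^ 2 * u 2 ∧
      tApply m u 2 = -2 * u 0 * u 2 ^ 2 - 4 * u 1 ^ 2 * u 2) :
    Semipositive m := by
  intro u hu hne
  obtain ⟨h0, h1, h2⟩ := hm u
  have hu0 : (0:ℝ) ≤ u 0 := hu 0
  have hu1 : (0:ℝ) ≤ u 1 := hu 1
  have hu2 : (0:ℝ) ≤ u 2 := hu 2
  rcases lt_or_eq_of_le hu1 with h | h
  · exact ⟨1, h, by rw [h1]; positivity⟩
  · rcases lt_or_eq_of_le hu0 with h' | h'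
    · exact ⟨0, h', by rw [h0, ← h]; ring_nf; exact le_refl _⟩
    · have h2pos : 0 < u 2 := by
        rcases lt_or_eq_of_le hu2 with h'' | h''
        · exact h''
        · exfalso; apply hne; funext i
          fin_cases i <;> simp <;> first | exact h.symm | exact h'.symm | exact h''.symm
      exact ⟨2, h2pos, by rw [h2, ← h, ← h']; ring_nf; exact le_refl _⟩
end

section
/- There exists a semipositive tensor of even order which is not row diagonal: the tensor M of order 4 and dimension 3 with M u^3 = (2u_1 u_2^2 + 2u_1^2 u_3, −3u_1^2 u_2 − u_2^2 u_3, 3u_1 u_3^2) is semipositive but not a row diagonal tensor. -/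
open Finset

lemma single_sum (c : ℝ) (g : Fin 3 → Fin 3) (u : Fin 3 → ℝ) :
    ∑ f : Fin 3 → Fin 3, (if f = g then c else 0) * ∏ j, u (f j)
      = c * (u (g 0) * u (g 1) * u (g 2)) := by
  rw [Finset.sum_eq_single g]
  · simp [Fin.prod_univ_three, mul_assoc]
  · intro b _ hb; simp [hb]
  · simp

lemma key19 (u : Fin 3 → ℝ) :
    (tApply (fun i f =>
      if i = 0 then (if f = ![0,1,1] then 2 else 0) + (if f = ![0,0,2] then 2 else 0)
      else if i = 1 then (if f = ![0,0,1] then -3 else 0) + (if f = ![1,1,2] then -1 else 0)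
      else (if f = ![0,2,2] then 3 else 0)) u 0 = 2 * u 0 * u 1 ^ 2 + 2 * u 0 ^ 2 * u 2) ∧
    (tApply (fun i f =>
      if i = 0 then (if f = ![0,1,1] then 2 else 0) + (if f = ![0,0,2] then 2 else 0)
      else if i = 1 then (if f = ![0,0,1] then -3 else 0) + (if f = ![1,1,2] then -1 else 0)
      else (if f = ![0,2,2] then 3 else 0)) u 1 = -3 * u 0 ^ 2 * u 1 - u 1 ^ 2 * u 2) ∧
    (tApply (fun i f =>
      if i = 0 then (if f = ![0,1,1] then 2 else 0) + (if f = ![0,0,2] then 2 else 0)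
      else if i = 1 then (if f = ![0,0,1] then -3 else 0) + (if f = ![1,1,2] then -1 else 0)
      else (if f = ![0,2,2] then 3 else 0)) u 2 = 3 * u 0 * u 2 ^ 2) := by
  refine ⟨?_, ?_, ?_⟩
  · simp only [tApply, if_pos rfl, if_true, add_mul]
    rw [Finset.sum_add_distrib, single_sum, single_sum]
    simp; ring
  · have h1 : (1 : Fin 3) ≠ 0 := by decide
    simp only [tApply, if_neg h1, if_pos rfl, if_true, add_mul]
    rw [Finset.sum_add_distrib, single_sum, single_sum]
    simp; ring
  · have h1 : (2 : Fin 3) ≠ 0 := by decide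
    have h2 : (2 : Fin 3) ≠ 1 := by decide
    simp only [tApply, if_neg h1, if_neg h2]
    rw [single_sum]
    simp; ring

theorem stmt19 : ∃ m : Fin 3 → (Fin 3 → Fin 3) → ℝ,
    (∀ u : Fin 3 → ℝ,
      tApply m u 0 = 2 * u 0 * u 1 ^ 2 + 2 * u 0 ^ 2 * u 2 ∧
      tApply m u 1 = -3 * u 0 ^ 2 * u 1 - u 1 ^ 2 * u 2 ∧
      tApply m u 2 = 3 * u 0 * u 2 ^ 2) ∧
    Semipositive m ∧ ¬ RowDiagonal m  := by
  refine ⟨_, fun u => key19 u, ?_, ?_⟩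
  · intro u hu hne
    obtain ⟨h0, h1, h2⟩ := key19 u
    have hu0 : 0 ≤ u 0 := hu 0
    have hu1 : 0 ≤ u 1 := hu 1
    have hu2 : 0 ≤ u 2 := hu 2
    rcases hu0.lt_or_eq with p0 | p0
    · exact ⟨0, p0, by rw [h0]; positivity⟩
    · rcases hu2.lt_or_eq with p2 | p2
      · exact ⟨2, p2, by rw [h2, ← p0]; ring_nf; exact le_refl 0⟩
      · have hne1 : u 1 ≠ 0 := by
          intro h
          apply hne
          funext i
          fin_cases i <;> simp [← p0, ← p2, h]
        exact ⟨1, lt_of_le_of_ne hu1 (Ne.symm hne1),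
          by rw [h1, ← p0, ← p2]; ring_nf; exact le_refl 0⟩
  · intro h
    have := h 0 ![0,1,1] (by decide)
    have hne : ¬ (![0,1,1] = (![0,0,2] : Fin 3 → Fin 3)) := by decide
    norm_num [hne] at this
end
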